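/- Let (G,D,⋆) be a probabilistic metric space with ⋆ continuous. If f,g ∈ Π(G) with associated Cauchy sequences (a_n),(b_n) (so D(a_n,x) → f(x) and D(b_n,x) → g(x) weakly for all x), then sup_{x∈G} f(x) ⋆ g(x) = lim_{n,m} D(a_n,b_m) = lim_n D(a_n,b_n) = lim_m f(b_m) = lim_n g(a_n); in particular this value is independent of the choice of Cauchy sequences. -/

import Mathlib

open Filter Topology Set

/-- A (real-domain representation of a) distribution function in Δ⁺ :
nondecreasing, with values in [0,1], left-continuous, vanishing on (-∞,0]. -/
def MemDP (f : ℝ → ℝ) : Prop :=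
  Monotone f ∧ (∀ t, 0 ≤ f t) ∧ (∀ t, f t ≤ 1) ∧
  (∀ t : ℝ, Tendsto f (nhdsWithin t (Set.Iio t)) (nhds (f t))) ∧
  (∀ t ≤ (0:ℝ), f t = 0)

/-- The distribution H₀. -/
noncomputable def H0 : ℝ → ℝ := fun t => if 0 < t then 1 else 0

/-- The distribution H_∞ (zero at every finite point). -/
def Hinf : ℝ → ℝ := fun _ => 0

/-- Pointwise order on distribution functions. -/
def dpLE (f g : ℝ → ℝ) : Prop := ∀ t, f t ≤ g t

/-- Triangle function on Δ⁺. -/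
structure IsTriangle (star : (ℝ → ℝ) → (ℝ → ℝ) → (ℝ → ℝ)) : Prop where
  mem : ∀ f g, MemDP f → MemDP g → MemDP (star f g)
  comm : ∀ f g, MemDP f → MemDP g → star f g = star g f
  assoc : ∀ f g h, MemDP f → MemDP g → MemDP h →
    star f (star g h) = star (star f g) h
  ident : ∀ f, MemDP f → star f H0 = f
  mono : ∀ f g h, MemDP f → MemDP g → MemDP h → dpLE f g → dpLE (star f h) (star g h)

/-- Sup-continuity of a triangle function (suprema in Δ⁺ are pointwise). -/
def SupCont (star : (ℝ → ℝ) → (ℝ → ℝ) → (ℝ → ℝ)) : Prop :=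
  ∀ (I : Type) (_ : Nonempty I) (F : I → ℝ → ℝ) (L : ℝ → ℝ),
    (∀ i, MemDP (F i)) → MemDP L →
    ∀ t, (⨆ i, star (F i) L t) = star (fun s => ⨆ i, F i s) L t

/-- Weak convergence in Δ⁺: pointwise convergence at each continuity point of the limit. -/
def WConv (Fn : ℕ → ℝ → ℝ) (F : ℝ → ℝ) : Prop :=
  ∀ t, ContinuousAt F t → Tendsto (fun n => Fn n t) atTop (nhds (F t))

/-- Continuity of a triangle function w.r.t. weak convergence. -/
def StarCont (star : (ℝ → ℝ) → (ℝ → ℝ) → (ℝ → ℝ)) : Prop :=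
  ∀ (Fn Ln : ℕ → ℝ → ℝ) (F L : ℝ → ℝ),
    (∀ n, MemDP (Fn n)) → (∀ n, MemDP (Ln n)) → MemDP F → MemDP L →
    WConv Fn F → WConv Ln L → WConv (fun n => star (Fn n) (Ln n)) (star F L)

/-- Probabilistic metric space (G, D, ⋆). -/
structure IsPMS {G : Type} (D : G → G → ℝ → ℝ)
    (star : (ℝ → ℝ) → (ℝ → ℝ) → (ℝ → ℝ)) : Prop where
  tri : IsTriangle star
  mem : ∀ p q, MemDP (D p q)
  eq_iff : ∀ p q, D p q = H0 ↔ p = q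
  symm : ∀ p q, D p q = D q p
  triangle_ineq : ∀ p q r, dpLE (star (D p q) (D q r)) (D p r)

/-- Probabilistic invariant metric group. -/
structure IsPIMG {G : Type} [Group G] (D : G → G → ℝ → ℝ)
    (star : (ℝ → ℝ) → (ℝ → ℝ) → (ℝ → ℝ)) extends IsPMS D star : Prop where
  invL : ∀ p q r : G, D (r * p) (r * q) = D p q
  invR : ∀ p q r : G, D (p * r) (q * r) = D p q

/-- Probabilistic 1-Lipschitz map. -/
def Lip1 {G : Type} (D : G → G → ℝ → ℝ) (star : (ℝ → ℝ) → (ℝ → ℝ) → (ℝ → ℝ))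
    (f : G → ℝ → ℝ) : Prop :=
  (∀ x, MemDP (f x)) ∧ ∀ x y, dpLE (star (D x y) (f y)) (f x)

/-- δ_a(y) = D(y,a). -/
def dlt {G : Type} (D : G → G → ℝ → ℝ) (a : G) : G → ℝ → ℝ := fun y => D y a

/-- Sup-convolution (f ⊙ g)(x) = sup_{yz = x} f(y) ⋆ g(z), pointwise. -/
noncomputable def sconv {G : Type} [Group G] (star : (ℝ → ℝ) → (ℝ → ℝ) → (ℝ → ℝ))
    (f g : G → ℝ → ℝ) : G → ℝ → ℝ :=
  fun x t => ⨆ y : G, star (f (x * y⁻¹)) (g y) t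

/-- Cauchy sequence for a probabilistic metric: D(a_n, a_p) → H₀ weakly. -/
def PCauchy {G : Type} (D : G → G → ℝ → ℝ) (a : ℕ → G) : Prop :=
  ∀ t > (0:ℝ), ∀ ε > (0:ℝ), ∃ N, ∀ n ≥ N, ∀ p ≥ N, 1 - ε ≤ D (a n) (a p) t

/-- Π(G): probabilistic 1-Lipschitz maps that are pointwise weak limits of δ_{a_n}
for some Cauchy sequence (a_n). -/
def InPi {G : Type} (D : G → G → ℝ → ℝ) (star : (ℝ → ℝ) → (ℝ → ℝ) → (ℝ → ℝ))
    (f : G → ℝ → ℝ) : Prop :=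
  Lip1 D star f ∧ ∃ a : ℕ → G, PCauchy D a ∧ ∀ x, WConv (fun n => D (a n) x) (f x)

/-- 𝔻(f,g) = sup_{x∈G} f(x) ⋆ g(x), pointwise. -/
noncomputable def DD {G : Type} (star : (ℝ → ℝ) → (ℝ → ℝ) → (ℝ → ℝ))
    (f g : G → ℝ → ℝ) : ℝ → ℝ :=
  fun t => ⨆ x : G, star (f x) (g x) t

/-- t-norm on [0,1]. -/
structure IsTnorm (T : ℝ → ℝ → ℝ) : Prop where
  mem : ∀ x ∈ Set.Icc (0:ℝ) 1, ∀ y ∈ Set.Icc (0:ℝ) 1, T x y ∈ Set.Icc (0:ℝ) 1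
  comm : ∀ x y, T x y = T y x
  assoc : ∀ x y z, T x (T y z) = T (T x y) z
  mono : ∀ x y z, y ≤ z → T x y ≤ T x z
  one : ∀ x ∈ Set.Icc (0:ℝ) 1, T x 1 = x

/-- Left-continuity of a t-norm (in each variable; by commutativity one suffices). -/
def LeftCtsTnorm (T : ℝ → ℝ → ℝ) : Prop :=
  ∀ y x : ℝ, Tendsto (fun s => T s y) (nhdsWithin x (Set.Iio x)) (nhds (T x y))

/-- The triangle function ⋆_T : (F ⋆_T L)(t) = sup_{s+u=t} T(F(s), L(u)). -/
noncomputable def starT (T : ℝ → ℝ → ℝ) (f g : ℝ → ℝ) : ℝ → ℝ :=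
  fun t => ⨆ s : ℝ, T (f s) (g (t - s))

/-!
Write `L = sup_x f(x) ⋆ g(x)`. Each sequence `R_k` in question dominates terms converging
weakly to `f(x) ⋆ g(x)`, namely `D(a_n,x) ⋆ D(x,b_m) ≤ D(a_n,b_m)` and `D(b_m,x) ⋆ f(x) ≤ f(b_m)`;
approximating the supremum from the left at continuity points gives `liminf R_k ≥ L`.
Conversely `R_k ⋆ Q_k ≤ L` for some `Q_k → H₀` (for `D(a_n,b_n)` take `Q_n = f(a_n) ⋆ g(b_n)`
and use that `f` is 1-Lipschitz), and this forces `limsup R_k ≤ L`. That `f(a_n) → H₀` comes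
from `(a_n)` being Cauchy. The limit over pairs `(n,m)` reduces to the diagonal limit along
arbitrary sequences of pairs tending to infinity.
-/

theorem Monotone.exists_continuousAt_mem_Ioo {φ : ℝ → ℝ} (hφ : Monotone φ) {u v : ℝ}
    (huv : u < v) : ∃ s ∈ Ioo u v, ContinuousAt φ s := by
  obtain ⟨s, hs, hsuv⟩ := (hφ.countable_not_continuousAt.dense_compl ℝ).exists_between huv
  exact ⟨s, hsuv, not_not.1 hs⟩

theorem memDP_step {t c : ℝ} (ht : 0 ≤ t) (hc₀ : 0 ≤ c) (hc₁ : c ≤ 1) :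
    MemDP (fun s => if t < s then c else 0) := by
  refine ⟨fun u v huv => ?_, fun s => ?_, fun s => ?_, fun u => ?_, fun s hs => ?_⟩ <;>
    dsimp only
  · by_cases hu : t < u
    · simp [hu, hu.trans_le huv]
    · rw [if_neg hu]; split_ifs <;> simp [hc₀]
  · split_ifs <;> simp [hc₀]
  · split_ifs <;> linarith
  · rcases le_or_gt u t with hu | hu
    · rw [if_neg hu.not_gt]
      refine tendsto_const_nhds.congr' ?_
      filter_upwards [self_mem_nhdsWithin] with s hs
      rw [if_neg (hs.out.le.trans hu).not_gt]
    · rw [if_pos hu]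
      refine tendsto_const_nhds.congr' ?_
      filter_upwards [nhdsWithin_le_nhds (Ioi_mem_nhds hu)] with s hs
      rw [if_pos hs.out]
  · exact if_neg (hs.trans ht).not_gt

theorem memDP_H0 : MemDP H0 :=
  memDP_step le_rfl zero_le_one le_rfl

theorem WConv.comp_tendsto {Fn : ℕ → ℝ → ℝ} {F : ℝ → ℝ} (h : WConv Fn F) {φ : ℕ → ℕ}
    (hφ : Tendsto φ atTop atTop) : WConv (fun k => Fn (φ k)) F :=
  fun t ht => (h t ht).comp hφ

theorem eventually_lt_of_lt_iSup {ι X : Type*} [Nonempty X] {l : Filter ι}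
    {Φ : X → ℝ → ℝ} (hΦ : ∀ x, MemDP (Φ x)) {R : ι → ℝ → ℝ} (hR : ∀ k, Monotone (R k))
    (hlim : ∀ x s, ContinuousAt (Φ x) s → ∀ c < Φ x s, ∀ᶠ k in l, c < R k s)
    {t c : ℝ} (hc : c < ⨆ x, Φ x t) : ∀ᶠ k in l, c < R k t := by
  obtain ⟨x, hx⟩ := exists_lt_of_lt_ciSup hc
  obtain ⟨t', hct', ht't⟩ :=
    (((hΦ x).2.2.2.1 t).eventually (lt_mem_nhds hx)).and self_mem_nhdsWithin |>.exists
  obtain ⟨s, hs, hcont⟩ := (hΦ x).1.exists_continuousAt_mem_Ioo ht't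
  filter_upwards [hlim x s hcont c (hct'.trans_le ((hΦ x).1 hs.1.le))] with k hk
  exact hk.trans_le (hR k hs.2.le)

namespace IsTriangle

variable {star : (ℝ → ℝ) → (ℝ → ℝ) → (ℝ → ℝ)}

theorem le_of_star_le_of_wconv_H0 (tri : IsTriangle star) (hc : StarCont star)
    {J L : ℝ → ℝ} {Q : ℕ → ℝ → ℝ} (hJ : MemDP J) (hQ : ∀ k, MemDP (Q k))
    (hQ0 : WConv Q H0) (hJQ : ∀ k s, star J (Q k) s ≤ L s) {s : ℝ}
    (hs : ContinuousAt J s) : J s ≤ L s := by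
  have hlim := hc (fun _ => J) Q J H0 (fun _ => hJ) hQ hJ memDP_H0
    (fun _ _ => tendsto_const_nhds) hQ0
  rw [tri.ident J hJ] at hlim
  exact le_of_tendsto' (hlim s hs) fun k => hJQ k s

/-- If `c ≤ R k t` frequently, the step `c · 1_{(t,∞)}` lies below `R k` along a subsequence,
hence below `L` on `(t, ∞)`, contradicting `L t < c` and right-continuity of `L` at `t`. -/
theorem eventually_lt_of_star_le (tri : IsTriangle star) (hc : StarCont star)
    {R Q : ℕ → ℝ → ℝ} {L : ℝ → ℝ} (hR : ∀ k, MemDP (R k)) (hQ : ∀ k, MemDP (Q k))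
    (hQ0 : WConv Q H0) (hRQ : ∀ k s, star (R k) (Q k) s ≤ L s) {t c : ℝ}
    (hL : ContinuousAt L t) (hLc : L t < c) : ∀ᶠ k in atTop, R k t < c := by
  by_contra hfreq
  simp only [not_eventually, not_lt] at hfreq
  obtain ⟨φ, hφmono, hφ⟩ := extraction_of_frequently_atTop hfreq
  have hL₀ : ∀ s, 0 ≤ L s := fun s =>
    ((tri.mem _ _ (hR 0) (hQ 0)).2.1 s).trans (hRQ 0 s)
  rcases le_or_gt t 0 with ht | ht
  · linarith [hφ 0, (hR (φ 0)).2.2.2.2 t ht, hL₀ t]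
  have hJ : MemDP (fun s => if t < s then c else 0) :=
    memDP_step ht.le ((hL₀ t).trans hLc.le) ((hφ 0).trans ((hR _).2.2.1 t))
  have hJR : ∀ k, dpLE (fun s => if t < s then c else 0) (R (φ k)) := fun k s => by
    dsimp only
    split_ifs with hs
    · exact (hφ k).trans ((hR _).1 hs.le)
    · exact (hR _).2.1 s
  have hcL : ∀ s, t < s → c ≤ L s := by
    intro s hs
    have hJs : ContinuousAt (fun s => if t < s then c else 0) s :=
      continuousAt_const.congr <| by
        filter_upwards [Ioi_mem_nhds hs] with u hu using (if_pos hu).symm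
    simpa [hs] using tri.le_of_star_le_of_wconv_H0 hc hJ (fun k => hQ (φ k))
      (hQ0.comp_tendsto hφmono.tendsto_atTop) (fun k s =>
        (tri.mono _ _ _ hJ (hR _) (hQ _) (hJR k) s).trans (hRQ (φ k) s)) hJs
  have : c ≤ L t := ge_of_tendsto (hL.tendsto.mono_left (nhdsWithin_le_nhds (s := Ioi t)))
    (eventually_nhdsWithin_of_forall hcL)
  linarith

theorem le_DD (tri : IsTriangle star) {G : Type} {f g : G → ℝ → ℝ}
    (hf : ∀ x, MemDP (f x)) (hg : ∀ x, MemDP (g x)) (x : G) (s : ℝ) :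
    star (f x) (g x) s ≤ DD star f g s :=
  le_ciSup (f := fun y => star (f y) (g y) s) ⟨1, by rintro _ ⟨y, rfl⟩; exact (tri.mem _ _ (hf y) (hg y)).2.2.1 s⟩ x

theorem DD_comm (tri : IsTriangle star) {G : Type} {f g : G → ℝ → ℝ}
    (hf : ∀ x, MemDP (f x)) (hg : ∀ x, MemDP (g x)) : DD star f g = DD star g f := by
  funext t
  exact congrArg iSup (funext fun x => by rw [tri.comm _ _ (hf x) (hg x)])

end IsTriangle

theorem H0_not_continuousAt_zero : ¬ContinuousAt H0 0 := by
  intro hcont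
  have hright : Tendsto H0 (𝓝[>] 0) (𝓝 1) :=
    tendsto_const_nhds.congr' (eventually_nhdsWithin_of_forall fun s (hs : 0 < s) =>
      (if_pos hs).symm)
  have := tendsto_nhds_unique (hcont.tendsto.mono_left nhdsWithin_le_nhds) hright
  simp [H0] at this

namespace IsPMS

variable {G : Type} {D : G → G → ℝ → ℝ} {star : (ℝ → ℝ) → (ℝ → ℝ) → (ℝ → ℝ)}

theorem star_dist_le (h : IsPMS D star) (p q r : G) (s : ℝ) :
    star (D p q) (D r q) s ≤ D p r s := by
  simpa only [h.symm q r] using h.triangle_ineq p q r s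

theorem wconv_H0_of_pCauchy (h : IsPMS D star) {f : G → ℝ → ℝ} (hf : ∀ x, MemDP (f x))
    {a : ℕ → G} (ha : PCauchy D a) (hfa : ∀ x, WConv (fun n => D (a n) x) (f x)) :
    WConv (fun n => f (a n)) H0 := by
  intro t ht
  rcases lt_trichotomy t 0 with htn | rfl | htp
  · simp only [H0, if_neg htn.not_gt, (hf _).2.2.2.2 t htn.le, tendsto_const_nhds_iff]
  · exact absurd ht H0_not_continuousAt_zero
  rw [H0, if_pos htp]
  refine tendsto_order.2 ⟨fun c hc => ?_, fun c hc =>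
    Eventually.of_forall fun n => ((hf _).2.2.1 t).trans_lt hc⟩
  obtain ⟨N, hN⟩ := ha (t / 2) (half_pos htp) ((1 - c) / 2) (by linarith)
  filter_upwards [eventually_ge_atTop N] with n hn
  obtain ⟨s, hs, hcont⟩ := (hf (a n)).1.exists_continuousAt_mem_Ioo (half_lt_self htp)
  have hfs : 1 - (1 - c) / 2 ≤ f (a n) s := ge_of_tendsto (hfa (a n) s hcont) <| by
    filter_upwards [eventually_ge_atTop N] with p hp
    exact (hN p hp n hn).trans ((h.mem _ _).1 hs.1.le)
  linarith [(hf (a n)).1 hs.2.le]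

variable {f g : G → ℝ → ℝ} {a b : ℕ → G}

theorem wconv_dist_DD (h : IsPMS D star) (hc : StarCont star) (hf : Lip1 D star f)
    (hg : ∀ x, MemDP (g x)) (hfa : ∀ x, WConv (fun n => D (a n) x) (f x))
    (hgb : ∀ x, WConv (fun n => D (b n) x) (g x)) (hfa0 : WConv (fun n => f (a n)) H0)
    (hgb0 : WConv (fun n => g (b n)) H0) :
    WConv (fun n => D (a n) (b n)) (DD star f g) := by
  have : Nonempty G := ⟨a 0⟩
  have hQ0 : WConv (fun n => star (f (a n)) (g (b n))) H0 := by
    simpa only [h.tri.ident H0 memDP_H0] using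
      hc _ _ H0 H0 (fun n => hf.1 _) (fun n => hg _) memDP_H0 memDP_H0 hfa0 hgb0
  have hRQ : ∀ n s, star (D (a n) (b n)) (star (f (a n)) (g (b n))) s ≤ DD star f g s := by
    intro n s
    rw [h.tri.assoc _ _ _ (h.mem _ _) (hf.1 _) (hg _)]
    refine (h.tri.mono _ _ _ (h.tri.mem _ _ (h.mem _ _) (hf.1 _)) (hf.1 _) (hg _) ?_ s).trans
      (h.tri.le_DD hf.1 hg _ s)
    simpa only [h.symm (b n)] using hf.2 (b n) (a n)
  intro t ht
  refine tendsto_order.2 ⟨fun c hcL => eventually_lt_of_lt_iSup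
    (fun x => h.tri.mem _ _ (hf.1 x) (hg x)) (fun n => (h.mem _ _).1) ?_ hcL,
    fun c hLc => h.tri.eventually_lt_of_star_le hc (fun n => h.mem _ _)
      (fun n => h.tri.mem _ _ (hf.1 _) (hg _)) hQ0 hRQ ht hLc⟩
  intro x s hs c hcs
  have hlim := hc _ _ _ _ (fun n => h.mem (a n) x) (fun n => h.mem (b n) x) (hf.1 x) (hg x)
    (hfa x) (hgb x) s hs
  filter_upwards [hlim.eventually (lt_mem_nhds hcs)] with n hn
  exact hn.trans_le (h.star_dist_le _ _ _ s)

theorem wconv_lip1_DD (h : IsPMS D star) (hc : StarCont star) (hf : Lip1 D star f)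
    (hg : ∀ x, MemDP (g x)) (hgb : ∀ x, WConv (fun n => D (b n) x) (g x))
    (hgb0 : WConv (fun n => g (b n)) H0) :
    WConv (fun n => f (b n)) (DD star f g) := by
  have : Nonempty G := ⟨b 0⟩
  intro t ht
  refine tendsto_order.2 ⟨fun c hcL => eventually_lt_of_lt_iSup
    (fun x => h.tri.mem _ _ (hf.1 x) (hg x)) (fun n => (hf.1 _).1) ?_ hcL,
    fun c hLc => h.tri.eventually_lt_of_star_le hc (fun n => hf.1 _) (fun n => hg _) hgb0
      (fun n => h.tri.le_DD hf.1 hg _) ht hLc⟩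
  intro x s hs c hcs
  have hlim := hc _ (fun _ => f x) _ _ (fun n => h.mem (b n) x) (fun _ => hf.1 x) (hg x)
    (hf.1 x) (hgb x) (fun _ _ => tendsto_const_nhds) s
    (by rwa [h.tri.comm _ _ (hg x) (hf.1 x)])
  rw [h.tri.comm _ _ (hg x) (hf.1 x)] at hlim
  filter_upwards [hlim.eventually (lt_mem_nhds hcs)] with n hn
  exact hn.trans_le (hf.2 (b n) x s)

theorem tendsto_prod_dist_DD (h : IsPMS D star) (hc : StarCont star) (hf : Lip1 D star f)
    (hg : ∀ x, MemDP (g x)) (hfa : ∀ x, WConv (fun n => D (a n) x) (f x))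
    (hgb : ∀ x, WConv (fun n => D (b n) x) (g x)) (hfa0 : WConv (fun n => f (a n)) H0)
    (hgb0 : WConv (fun n => g (b n)) H0) {t : ℝ} (ht : ContinuousAt (DD star f g) t) :
    Tendsto (fun p : ℕ × ℕ => D (a p.1) (b p.2) t) atTop (𝓝 (DD star f g t)) := by
  refine tendsto_of_seq_tendsto fun p hp => ?_
  rw [← prod_atTop_atTop_eq] at hp
  have h₁ : Tendsto (fun k => (p k).1) atTop atTop := tendsto_fst.comp hp
  have h₂ : Tendsto (fun k => (p k).2) atTop atTop := tendsto_snd.comp hp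
  exact h.wconv_dist_DD hc hf hg (fun x => (hfa x).comp_tendsto h₁)
    (fun x => (hgb x).comp_tendsto h₂) (hfa0.comp_tendsto h₁) (hgb0.comp_tendsto h₂) t ht

end IsPMS

/-- for f,g ∈ Π(G) with associated Cauchy sequences (a_n),(b_n),
sup_x f(x) ⋆ g(x) = lim_{n,m} D(a_n,b_m) = lim_n D(a_n,b_n) = lim_m f(b_m) = lim_n g(a_n). -/
theorem stmt13 {G : Type} (D : G → G → ℝ → ℝ)
    (star : (ℝ → ℝ) → (ℝ → ℝ) → (ℝ → ℝ)) (h : IsPMS D star)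
    (hc : StarCont star) (f g : G → ℝ → ℝ)
    (hf : Lip1 D star f) (hg : Lip1 D star g) (a b : ℕ → G)
    (ha : PCauchy D a) (hb : PCauchy D b)
    (hfa : ∀ x, WConv (fun n => D (a n) x) (f x))
    (hgb : ∀ x, WConv (fun n => D (b n) x) (g x)) :
    WConv (fun n => D (a n) (b n)) (DD star f g) ∧
    WConv (fun m => f (b m)) (DD star f g) ∧
    WConv (fun n => g (a n)) (DD star f g) ∧
    (∀ t, ContinuousAt (DD star f g) t →
      Tendsto (fun p : ℕ × ℕ => D (a p.1) (b p.2) t) atTop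
        (nhds (DD star f g t))) := by
  have hfa0 := h.wconv_H0_of_pCauchy hf.1 ha hfa
  have hgb0 := h.wconv_H0_of_pCauchy hg.1 hb hgb
  refine ⟨h.wconv_dist_DD hc hf hg.1 hfa hgb hfa0 hgb0, h.wconv_lip1_DD hc hf hg.1 hgb hgb0,
    ?_, fun t ht => h.tendsto_prod_dist_DD hc hf hg.1 hfa hgb hfa0 hgb0 ht⟩
  rw [h.tri.DD_comm hf.1 hg.1]
  exact h.wconv_lip1_DD hc hg hf.1 hfa hfa0
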